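/- arXiv:1903.04139 — 6 statements merged into one kernel-verified Lean document; each statement's English description precedes it below -/
import Mathlib

section
/- For any group G, the set Aut_l(G) of absolute central automorphisms of G is an abelian normal subgroup of Aut(G). -/
/-- The absolute centre `L(G)`: elements fixed by every automorphism of `G`. -/
def absoluteCenter (G : Type*) [Group G] : Subgroup G where
  carrier := {g | ∀ α : MulAut G, α g = g}
  one_mem' := fun α => map_one α
  mul_mem' := fun {a b} ha hb α => by rw [map_mul, ha α, hb α]
  inv_mem' := fun {a} ha α => by rw [map_inv, ha α]

/-- The group `Aut_l(G)` of absolute central automorphisms of `G`. -/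
def absCentralAut (G : Type*) [Group G] : Subgroup (MulAut G) where
  carrier := {α | ∀ g : G, g⁻¹ * α g ∈ absoluteCenter G}
  one_mem' := fun g => by simpa using (absoluteCenter G).one_mem
  mul_mem' := fun {α β} hα hβ g => by
    have h : g⁻¹ * (α * β) g = (g⁻¹ * β g) * ((β g)⁻¹ * α (β g)) := by
      simp [MulAut.mul_apply, mul_assoc]
    rw [h]; exact mul_mem (hβ g) (hα (β g))
  inv_mem' := fun {α} hα g => by
    have h : g⁻¹ * α⁻¹ g = ((α⁻¹ g)⁻¹ * α (α⁻¹ g))⁻¹ := by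
      simp [MulAut.inv_def, mul_assoc]
    rw [h]; exact inv_mem (hα (α⁻¹ g))

/-- `Aut_l(G)` (which is a subgroup of `Aut(G)` by the definition above) is an abelian
normal subgroup of `Aut(G)`. -/
theorem absCentralAut_normal_and_abelian (G : Type*) [Group G] :
    (absCentralAut G).Normal ∧ ∀ a b : absCentralAut G, a * b = b * a := by
  -- elements of the absolute centre are central
  have hcen : ∀ x ∈ absoluteCenter G, ∀ g : G, g * x = x * g := by
    intro x hx g
    have h := hx (MulAut.conj g)
    simp only [MulAut.conj_apply] at h
    have := congrArg (· * g) h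
    simpa [mul_assoc] using this
  constructor
  · constructor
    intro α hα β g
    have hx := hα (β⁻¹ g)
    have hfix : β ((β⁻¹ g)⁻¹ * α (β⁻¹ g)) = (β⁻¹ g)⁻¹ * α (β⁻¹ g) := hx β
    have key : g⁻¹ * (β * α * β⁻¹) g = (β⁻¹ g)⁻¹ * α (β⁻¹ g) := by
      rw [← hfix]
      simp [MulAut.mul_apply, map_mul, map_inv, MulAut.inv_def]
    rw [key]; exact hx
  · intro a b
    apply Subtype.ext
    apply MulEquiv.ext
    intro g
    have hu := a.2 g
    have hv := b.2 g
    have hav : (a : MulAut G) (g⁻¹ * (b : MulAut G) g) = g⁻¹ * (b : MulAut G) g := hv (a : MulAut G)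
    have hbu : (b : MulAut G) (g⁻¹ * (a : MulAut G) g) = g⁻¹ * (a : MulAut G) g := hu (b : MulAut G)
    have h1 : (a : MulAut G) ((b : MulAut G) g)
        = g * (g⁻¹ * (a : MulAut G) g) * (g⁻¹ * (b : MulAut G) g) := by
      have : (a : MulAut G) ((b : MulAut G) g)
          = (a : MulAut G) (g * (g⁻¹ * (b : MulAut G) g)) := by
        simp [mul_assoc]
      rw [this, map_mul, hav]
      simp [mul_assoc]
    have h2 : (b : MulAut G) ((a : MulAut G) g)
        = g * (g⁻¹ * (b : MulAut G) g) * (g⁻¹ * (a : MulAut G) g) := by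
      have : (b : MulAut G) ((a : MulAut G) g)
          = (b : MulAut G) (g * (g⁻¹ * (a : MulAut G) g)) := by
        simp [mul_assoc]
      rw [this, map_mul, hbu]
      simp [mul_assoc]
    have hcomm : (g⁻¹ * (a : MulAut G) g) * (g⁻¹ * (b : MulAut G) g)
        = (g⁻¹ * (b : MulAut G) g) * (g⁻¹ * (a : MulAut G) g) :=
      (hcen _ hu _).symm
    show ((a : MulAut G) * (b : MulAut G)) g = ((b : MulAut G) * (a : MulAut G)) g
    rw [MulAut.mul_apply, MulAut.mul_apply, h1, h2, mul_assoc g, mul_assoc g, hcomm]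
end

section
/- Let G be a finite group. Then Aut_l(G) is isomorphic to Hom(G/L(G), L(G)). -/
lemma absoluteCenter_le_center (G : Type*) [Group G] :
    absoluteCenter G ≤ Subgroup.center G := fun g hg => by
  rw [Subgroup.mem_center_iff]
  intro h
  have h1 : h * g * h⁻¹ = g := by simpa [MulAut.conj_apply] using hg (MulAut.conj h)
  calc h * g = (h * g * h⁻¹) * h := by group
    _ = g * h := by rw [h1]

instance (G : Type*) [Group G] : (absoluteCenter G).Normal :=
  ⟨fun g hg h => by
    have h1 : h * g * h⁻¹ = g := by simpa [MulAut.conj_apply] using hg (MulAut.conj h)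
    rw [h1]; exact hg⟩

/-- `L(G)` is central, hence abelian. -/
instance (G : Type*) [Group G] : CommGroup (absoluteCenter G) :=
  { (inferInstance : Group (absoluteCenter G)) with
    mul_comm := fun a b => Subtype.ext
      ((Subgroup.mem_center_iff.mp (absoluteCenter_le_center G a.2) b.1).symm) }

section
variable {G : Type*} [Group G]

/-- Auxiliary: the map `g ↦ g⁻¹ α g` as a hom into `L(G)`. -/
def toHomAux (α : absCentralAut G) : G →* absoluteCenter G where
  toFun g := ⟨g⁻¹ * (α : MulAut G) g, α.2 g⟩
  map_one' := by ext; simp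
  map_mul' g h := by
    ext
    have hc := Subgroup.mem_center_iff.mp (absoluteCenter_le_center G (α.2 g))
    push_cast
    simp only [map_mul, mul_inv_rev]
    calc h⁻¹ * g⁻¹ * ((α : MulAut G) g * (α : MulAut G) h)
        = h⁻¹ * (g⁻¹ * (α : MulAut G) g) * (α : MulAut G) h := by group
      _ = (g⁻¹ * (α : MulAut G) g) * h⁻¹ * (α : MulAut G) h := by rw [hc h⁻¹]
      _ = _ := by group

lemma toHomAux_ker (α : absCentralAut G) :
    absoluteCenter G ≤ (toHomAux α).ker := by
  intro z hz
  have : (α : MulAut G) z = z := hz (α : MulAut G)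
  simp [MonoidHom.mem_ker, toHomAux, this]

/-- Auxiliary: the automorphism `g ↦ g * f(gL)`. -/
def ofHomAux [Finite G] (f : (G ⧸ absoluteCenter G) →* absoluteCenter G) : G →* G where
  toFun g := g * f g
  map_one' := by simp
  map_mul' g h := by
    have hc := Subgroup.mem_center_iff.mp
      (absoluteCenter_le_center G (f (g : G ⧸ absoluteCenter G)).2)
    show g * h * (f ((g * h : G) : G ⧸ absoluteCenter G) : G) =
      g * (f (g : G ⧸ absoluteCenter G) : G) * (h * (f (h : G ⧸ absoluteCenter G) : G))
    have : ((g * h : G) : G ⧸ absoluteCenter G) = (g : G ⧸ absoluteCenter G) * h := rfl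
    rw [this, map_mul]
    push_cast
    calc (g * h : G) * ((f (g : G ⧸ absoluteCenter G) : G) * (f (h : G ⧸ absoluteCenter G) : G))
        = g * (h * (f (g : G ⧸ absoluteCenter G) : G)) * (f (h : G ⧸ absoluteCenter G) : G) := by
          group
      _ = g * ((f (g : G ⧸ absoluteCenter G) : G) * h) * (f (h : G ⧸ absoluteCenter G) : G) := by
          rw [hc h]
      _ = _ := by group

lemma ofHomAux_inj [Finite G] (f : (G ⧸ absoluteCenter G) →* absoluteCenter G) :
    Function.Injective (ofHomAux f) := by
  rw [← MonoidHom.ker_eq_bot_iff, Subgroup.eq_bot_iff_forall]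
  intro g hg
  rw [MonoidHom.mem_ker] at hg
  have hmem : g ∈ absoluteCenter G := by
    have : g = (f (g : G ⧸ absoluteCenter G) : G)⁻¹ := by
      rw [eq_inv_iff_mul_eq_one]; exact hg
    rw [this]; exact inv_mem (f _).2
  have hq : (g : G ⧸ absoluteCenter G) = 1 := (QuotientGroup.eq_one_iff g).mpr hmem
  have : g * (f (g : G ⧸ absoluteCenter G) : G) = 1 := hg
  rw [hq, map_one] at this
  simpa using this

end


/-- For a finite group `G`, `Aut_l(G) ≅ Hom(G/L(G), L(G))`. -/
theorem absCentralAut_iso_hom (G : Type*) [Group G] [Finite G] :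
    Nonempty (absCentralAut G ≃* ((G ⧸ absoluteCenter G) →* absoluteCenter G)) := by
  refine ⟨{
    toFun := fun α => QuotientGroup.lift _ (toHomAux α) (toHomAux_ker α)
    invFun := fun f =>
      ⟨MulEquiv.ofBijective (ofHomAux f)
        (Finite.injective_iff_bijective.mp (ofHomAux_inj f)),
        fun g => by
          show g⁻¹ * (g * (f (g : G ⧸ absoluteCenter G) : G)) ∈ absoluteCenter G
          simpa [mul_assoc] using (f (g : G ⧸ absoluteCenter G)).2⟩
    left_inv := fun α => by
      ext g
      show g * (g⁻¹ * (α : MulAut G) g) = (α : MulAut G) g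
      group
    right_inv := fun f => by
      ext g
      show g⁻¹ * (g * (f (g : G ⧸ absoluteCenter G) : G)) = (f (g : G ⧸ absoluteCenter G) : G)
      group
    map_mul' := fun α β => by
      ext g
      show g⁻¹ * (α : MulAut G) ((β : MulAut G) g) =
        (g⁻¹ * (α : MulAut G) g) * (g⁻¹ * (β : MulAut G) g)
      have hβ : (β : MulAut G) g = g * (g⁻¹ * (β : MulAut G) g) := by group
      have hfix : (α : MulAut G) (g⁻¹ * (β : MulAut G) g) = g⁻¹ * (β : MulAut G) g :=
        (β.2 g) (α : MulAut G)
      have hc := Subgroup.mem_center_iff.mp (absoluteCenter_le_center G (β.2 g))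
      rw [hβ, map_mul, hfix]; group
  }⟩
end

section
/- Let G be a finite group. Then the group Aut_{Z(G)}^{L(G)}(G), consisting of all automorphisms α of G such that g⁻¹α(g) ∈ L(G) for all g ∈ G and α fixes Z(G) elementwise, is isomorphic to Hom(G/Z(G), L(G)). -/
/-- The group `Aut_{Z(G)}^{L(G)}(G)` of absolute central automorphisms of `G`
fixing the centre elementwise. -/
def autZL (G : Type*) [Group G] : Subgroup (MulAut G) where
  carrier := {α | (∀ g : G, g⁻¹ * α g ∈ absoluteCenter G) ∧
      ∀ z ∈ Subgroup.center G, α z = z}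
  one_mem' := ⟨fun g => by simpa using (absoluteCenter G).one_mem, fun z _ => rfl⟩
  mul_mem' := fun {α β} hα hβ => by
    refine ⟨fun g => ?_, fun z hz => ?_⟩
    · have h : g⁻¹ * (α * β) g = (g⁻¹ * β g) * ((β g)⁻¹ * α (β g)) := by
        simp [MulAut.mul_apply, mul_assoc]
      rw [h]; exact mul_mem (hβ.1 g) (hα.1 (β g))
    · show α (β z) = z
      rw [hβ.2 z hz, hα.2 z hz]
  inv_mem' := fun {α} hα => by
    refine ⟨fun g => ?_, fun z hz => ?_⟩
    · have h : g⁻¹ * α⁻¹ g = ((α⁻¹ g)⁻¹ * α (α⁻¹ g))⁻¹ := by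
        simp [MulAut.inv_def, mul_assoc]
      rw [h]; exact inv_mem (hα.1 (α⁻¹ g))
    · conv_lhs => rw [← hα.2 z hz]
      exact α.symm_apply_apply z


section Aux

variable {G : Type*} [Group G]

lemma absCen_central (w : G) (hw : w ∈ absoluteCenter G) (h : G) : w * h = h * w :=
  (Subgroup.mem_center_iff.mp (absoluteCenter_le_center G hw) h).symm

/-- The homomorphism `G → L(G)` attached to `α ∈ autZL G`. -/
def autZL.toHom (α : autZL G) : G →* absoluteCenter G where
  toFun g := ⟨g⁻¹ * (α : MulAut G) g, α.2.1 g⟩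
  map_one' := by ext; simp
  map_mul' g h := by
    ext
    show (g * h)⁻¹ * (α : MulAut G) (g * h) =
        (g⁻¹ * (α : MulAut G) g) * (h⁻¹ * (α : MulAut G) h)
    have key : (g⁻¹ * (α : MulAut G) g) * h = h * (g⁻¹ * (α : MulAut G) g) :=
      absCen_central _ (α.2.1 g) h
    rw [map_mul]
    calc (g * h)⁻¹ * ((α : MulAut G) g * (α : MulAut G) h)
        = h⁻¹ * ((g⁻¹ * (α : MulAut G) g) * h) * (h⁻¹ * (α : MulAut G) h) := by group
      _ = h⁻¹ * (h * (g⁻¹ * (α : MulAut G) g)) * (h⁻¹ * (α : MulAut G) h) := by rw [key]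
      _ = (g⁻¹ * (α : MulAut G) g) * (h⁻¹ * (α : MulAut G) h) := by group

lemma autZL.center_le_ker (α : autZL G) :
    Subgroup.center G ≤ (autZL.toHom α).ker := fun z hz => by
  have : (α : MulAut G) z = z := α.2.2 z hz
  simp [autZL.toHom, MonoidHom.mem_ker, this]

/-- The induced homomorphism `G/Z(G) → L(G)`. -/
def autZL.toQHom (α : autZL G) : (G ⧸ Subgroup.center G) →* absoluteCenter G :=
  QuotientGroup.lift _ (autZL.toHom α) (autZL.center_le_ker α)

@[simp] lemma autZL.toQHom_mk (α : autZL G) (g : G) :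
    (autZL.toQHom α (g : G ⧸ Subgroup.center G) : G) = g⁻¹ * (α : MulAut G) g := rfl

/-- The homomorphism `autZL G →* Hom(G/Z, L)`. -/
def autZLToHom : autZL G →* ((G ⧸ Subgroup.center G) →* absoluteCenter G) where
  toFun := autZL.toQHom
  map_one' := by
    refine MonoidHom.ext fun x => ?_
    refine QuotientGroup.induction_on x fun g => ?_
    refine Subtype.ext ?_
    simp [autZL.toQHom_mk]
  map_mul' α β := by
    refine MonoidHom.ext fun x => ?_
    refine QuotientGroup.induction_on x fun g => ?_
    refine Subtype.ext ?_
    show ((autZL.toQHom (α * β)) (g : G ⧸ Subgroup.center G) : G) =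
      ((autZL.toQHom α (g : G ⧸ Subgroup.center G)) : G) *
      ((autZL.toQHom β (g : G ⧸ Subgroup.center G)) : G)
    simp only [autZL.toQHom_mk]
    set w := g⁻¹ * (β : MulAut G) g with hwdef
    have hw : w ∈ absoluteCenter G := β.2.1 g
    have hfix : (α : MulAut G) w = w := hw (α : MulAut G)
    have hβg : (β : MulAut G) g = g * w := by rw [hwdef]; group
    calc g⁻¹ * ((α : MulAut G) * β) g
        = g⁻¹ * (α : MulAut G) ((β : MulAut G) g) := rfl
      _ = g⁻¹ * ((α : MulAut G) g * (α : MulAut G) w) := by rw [hβg, map_mul]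
      _ = g⁻¹ * (α : MulAut G) g * w := by rw [hfix]; group
      _ = (g⁻¹ * (α : MulAut G) g) * (g⁻¹ * (β : MulAut G) g) := by rw [← hwdef]

lemma autZLToHom_injective : Function.Injective (autZLToHom (G := G)) := by
  intro α β h
  ext g
  have h1 : ((autZL.toQHom α (g : G ⧸ Subgroup.center G)) : G) =
      ((autZL.toQHom β (g : G ⧸ Subgroup.center G)) : G) := by
    rw [show autZL.toQHom α = autZL.toQHom β from h]
  simp only [autZL.toQHom_mk] at h1
  exact mul_left_cancel h1

end Aux


section Surj

variable {G : Type*} [Group G]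

/-- From `f : G/Z → L`, the endomorphism `g ↦ g * f(g)`. -/
def homToEnd (f : (G ⧸ Subgroup.center G) →* absoluteCenter G) : G →* G where
  toFun g := g * (f (g : G ⧸ Subgroup.center G) : G)
  map_one' := by simp
  map_mul' g h := by
    simp only [QuotientGroup.mk_mul, map_mul, Subgroup.coe_mul]
    have key : (f (g : G ⧸ Subgroup.center G) : G) * h = h * (f (g : G ⧸ Subgroup.center G) : G) :=
      absCen_central _ (f (g : G ⧸ Subgroup.center G)).2 h
    calc g * h * ((f (g : G ⧸ Subgroup.center G) : G) * (f (h : G ⧸ Subgroup.center G) : G))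
        = g * (h * (f (g : G ⧸ Subgroup.center G) : G)) * (f (h : G ⧸ Subgroup.center G) : G) := by
          group
      _ = g * ((f (g : G ⧸ Subgroup.center G) : G) * h) * (f (h : G ⧸ Subgroup.center G) : G) := by
          rw [key]
      _ = _ := by group

lemma homToEnd_injective (f : (G ⧸ Subgroup.center G) →* absoluteCenter G) :
    Function.Injective (homToEnd f) := by
  rw [← MonoidHom.ker_eq_bot_iff, eq_bot_iff]
  intro g hg
  have hg' : g * (f (g : G ⧸ Subgroup.center G) : G) = 1 := hg
  have hgL : g ∈ absoluteCenter G := by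
    have : g = (f (g : G ⧸ Subgroup.center G) : G)⁻¹ := by
      rw [eq_inv_iff_mul_eq_one]; exact hg'
    rw [this]
    exact (absoluteCenter G).inv_mem (f (g : G ⧸ Subgroup.center G)).2
  have hz : (g : G ⧸ Subgroup.center G) = 1 :=
    (QuotientGroup.eq_one_iff g).mpr (absoluteCenter_le_center G hgL)
  rw [hz] at hg'
  simp only [map_one, OneMemClass.coe_one, mul_one] at hg'
  simpa using hg'

end Surj

/-- For a finite group `G`, `Aut_{Z(G)}^{L(G)}(G) ≅ Hom(G/Z(G), L(G))`. -/
theorem autZL_iso_hom (G : Type*) [Group G] [Finite G] :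
    Nonempty (autZL G ≃* ((G ⧸ Subgroup.center G) →* absoluteCenter G)) := by
  refine ⟨MulEquiv.ofBijective autZLToHom ⟨autZLToHom_injective, fun f => ?_⟩⟩
  have hbij : Function.Bijective (homToEnd f) :=
    Finite.injective_iff_bijective.mp (homToEnd_injective f)
  set α : MulAut G := MulEquiv.ofBijective (homToEnd f) hbij with hα
  have hαapp : ∀ g : G, α g = g * (f (g : G ⧸ Subgroup.center G) : G) := fun g => rfl
  have hmem : α ∈ autZL G := by
    constructor
    · intro g
      have : g⁻¹ * α g = (f (g : G ⧸ Subgroup.center G) : G) := by rw [hαapp]; group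
      rw [this]
      exact (f (g : G ⧸ Subgroup.center G)).2
    · intro z hz
      have h1 : (z : G ⧸ Subgroup.center G) = 1 := (QuotientGroup.eq_one_iff z).mpr hz
      rw [hαapp, h1]
      simp
  refine ⟨⟨α, hmem⟩, ?_⟩
  refine MonoidHom.ext fun x => ?_
  refine QuotientGroup.induction_on x fun g => ?_
  refine Subtype.ext ?_
  show g⁻¹ * α g = (f (g : G ⧸ Subgroup.center G) : G)
  rw [hαapp]; group
end

section
/- Let G be a finite p-group of nilpotency class 2 such that exp(G/Z(G)) ≤ exp(L(G)). Then |Aut_l(G)| ≥ |G/Z(G)| · p^{r(s−1)}, where r is the rank of the finite abelian p-group G/Z(G) and s is the rank of the finite abelian p-group L(G). -/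
/-!
Each homomorphism `f : G/Z(G) → L(G)` yields an absolute central automorphism `g ↦ g f(gZ(G))`,
and different `f` give different automorphisms, so it suffices to bound `|Hom(G/Z(G), L(G))|`
from below; class `2` makes `G/Z(G)` abelian. If `G/Z(G) ≅ ∏ᵢ ℤ/p^{bᵢ}` then
`Hom(G/Z(G), L) ≅ ∏ᵢ L[p^{bᵢ}]`, and writing `L = ∏ⱼ ℤ/p^{cⱼ}`,
`|L[p^b]| = ∏ⱼ |(ℤ/p^{cⱼ})[p^b]| ≥ p^{Σⱼ min(b, cⱼ)} ≥ p^b · p^{s-1}`: the exponent hypothesis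
provides a factor with `cⱼ ≥ b`, and every other factor contributes at least `p`. The numbers of
cyclic factors bound the ranks from above.
-/

section Cyclic

open Subgroup

variable {G H : Type*} [Group G] [Group H]

noncomputable def monoidHomEquivOfForallMemZpowers {g : G} (hg : ∀ x, x ∈ zpowers g) :
    (G →* H) ≃ {h : H // h ^ orderOf g = 1} where
  toFun f := ⟨f g, by rw [← map_pow, pow_orderOf_eq_one, map_one]⟩
  invFun h := monoidHomOfForallMemZpowers hg (orderOf_dvd_of_pow_eq_one h.2)
  left_inv f := (MonoidHom.eq_iff_eq_on_generator hg _ _).mpr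
    (monoidHomOfForallMemZpowers_apply_gen hg _)
  right_inv h := Subtype.ext (monoidHomOfForallMemZpowers_apply_gen hg _)

lemma le_card_pow_eq_one_of_dvd_orderOf [Finite G] {x : G} {d n : ℕ} (hdx : d ∣ orderOf x)
    (hdn : d ∣ n) : d ≤ Nat.card {y : G // y ^ n = 1} := by
  set y := x ^ (orderOf x / d)
  have hy : orderOf y = d := orderOf_pow_orderOf_div (orderOf_pos x).ne' hdx
  have hyn : ∀ z : zpowers y, (z : G) ^ n = 1 := by
    rintro ⟨_, k, rfl⟩
    rw [← zpow_natCast, ← zpow_mul, mul_comm, zpow_mul, zpow_natCast,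
      orderOf_dvd_iff_pow_eq_one.mp (hy ▸ hdn), one_zpow]
  calc d = Nat.card (zpowers y) := (hy ▸ Nat.card_zpowers y).symm
    _ ≤ _ := Nat.card_le_card_of_injective (fun z => (⟨z, hyn z⟩ : {y : G // y ^ n = 1}))
      fun _ _ h => Subtype.ext (Subtype.mk.inj h)

lemma Nat.card_pi_pow_eq_one {ι : Type*} [Fintype ι] {M : ι → Type*} [∀ i, Monoid (M i)]
    (n : ℕ) : Nat.card {x : ∀ i, M i // x ^ n = 1} = ∏ i, Nat.card {y : M i // y ^ n = 1} := by
  rw [← Nat.card_pi]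
  exact Nat.card_congr <| (Equiv.subtypeEquivRight fun x => funext_iff).trans
    (Equiv.subtypePiEquivPi (p := fun i (y : M i) => y ^ n = 1))

lemma Group.rank_le_card_of_mulEquiv_pi {L : Type*} [CommGroup L] [Group.FG L] {ι : Type*}
    [Fintype ι] {M : ι → Type*} [∀ i, CommGroup (M i)] [∀ i, IsCyclic (M i)]
    (e : L ≃* ∀ i, M i) : Group.rank L ≤ Fintype.card ι := by
  classical
  choose gen hgen using fun i => IsCyclic.exists_generator (α := M i)
  let S : Finset L := Finset.univ.image fun i => e.symm (Pi.mulSingle i (gen i))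
  have hS : closure (S : Set L) = ⊤ := by
    refine eq_top_iff.mpr fun x _ => ?_
    rw [← e.symm_apply_apply x, ← Finset.univ_prod_mulSingle (e x), map_prod]
    refine prod_mem fun i _ => ?_
    obtain ⟨k, hk⟩ := mem_zpowers_iff.mp (hgen i (e x i))
    rw [← hk, Pi.mulSingle_zpow, map_zpow]
    exact zpow_mem (subset_closure (by simp [S])) k
  exact (Group.rank_le hS).trans Finset.card_image_le

lemma Multiplicative.mem_zpowers_ofAdd_one {n : ℕ} (x : Multiplicative (ZMod n)) :
    x ∈ zpowers (ofAdd 1) := by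
  obtain ⟨k, hk⟩ := ZMod.intCast_surjective x.toAdd
  exact ⟨k, show ofAdd 1 ^ k = x by rw [← ofAdd_zsmul, zsmul_one, hk, ofAdd_toAdd]⟩

end Cyclic

lemma Multiplicative.orderOf_ofAdd_one (n : ℕ) : orderOf (ofAdd (1 : ZMod n)) = n := by
  rw [orderOf_ofAdd_eq_addOrderOf, ZMod.addOrderOf_one]

lemma Multiplicative.natCard_zmod (n : ℕ) : Nat.card (Multiplicative (ZMod n)) = n := by
  rw [Nat.card_congr Multiplicative.toAdd, Nat.card_zmod]

lemma Multiplicative.exponent_zmod (n : ℕ) : Monoid.exponent (Multiplicative (ZMod n)) = n := by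
  rw [IsCyclic.exponent_eq_card, natCard_zmod]

lemma exists_le_of_pow_le_exponent_pi_zmod {p : ℕ} (hp : 1 < p) {κ : Type*} [Fintype κ]
    {c : κ → ℕ} {b : ℕ} (hb : b ≠ 0)
    (hbc : p ^ b ≤ Monoid.exponent (∀ j, Multiplicative (ZMod (p ^ c j)))) : ∃ j, b ≤ c j := by
  by_contra! h
  have hdvd : Monoid.exponent (∀ j, Multiplicative (ZMod (p ^ c j))) ∣ p ^ (b - 1) := by
    rw [Monoid.exponent_pi]
    refine Finset.lcm_dvd fun j _ => ?_
    rw [Multiplicative.exponent_zmod]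
    exact pow_dvd_pow p (by have := h j; omega)
  have := (pow_lt_pow_iff_right₀ hp).mpr (show b - 1 < b by omega)
  have := Nat.le_of_dvd (by positivity) hdvd
  omega

lemma MulEquiv.natCard_pow_eq_one {L M : Type*} [Monoid L] [Monoid M] (e : L ≃* M) (n : ℕ) :
    Nat.card {x : L // x ^ n = 1} = Nat.card {y : M // y ^ n = 1} :=
  Nat.card_congr <| e.toEquiv.subtypeEquiv fun x => by rw [← e.map_eq_one_iff, map_pow]; rfl

section PGroup

variable {p : ℕ} [Fact p.Prime]

lemma IsPGroup.exists_mulEquiv_pi_zmod_pow {L : Type*} [CommGroup L] [Finite L]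
    (hL : IsPGroup p L) :
    ∃ (ι : Type) (_ : Fintype ι) (c : ι → ℕ), (∀ i, c i ≠ 0) ∧
      Nonempty (L ≃* ∀ i, Multiplicative (ZMod (p ^ c i))) := by
  obtain ⟨ι, _, n, hn, ⟨e⟩⟩ := CommGroup.equiv_prod_multiplicative_zmod_of_finite L
  have hpow (i : ι) : ∃ c, n i = p ^ c := by
    have : NeZero (n i) := ⟨by have := hn i; omega⟩
    obtain ⟨c, hc⟩ := IsPGroup.iff_card.mp <|
      (hL.of_equiv e).of_surjective (Pi.evalMonoidHom _ i) (Function.surjective_eval i)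
    exact ⟨c, by rwa [Multiplicative.natCard_zmod] at hc⟩
  choose c hc using hpow
  obtain rfl : n = fun i => p ^ c i := funext hc
  exact ⟨ι, inferInstance, c, fun i hi => by simpa [hi] using hn i, ⟨e⟩⟩

lemma Multiplicative.pow_min_le_card_zmod_pow_pow_eq_one {b c : ℕ} :
    p ^ min b c ≤ Nat.card {y : Multiplicative (ZMod (p ^ c)) // y ^ p ^ b = 1} :=
  le_card_pow_eq_one_of_dvd_orderOf (x := ofAdd 1)
    (by rw [orderOf_ofAdd_one]; exact pow_dvd_pow p (min_le_right _ _))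
    (pow_dvd_pow p (min_le_left _ _))

lemma IsPGroup.pow_mul_pow_rank_sub_one_le_card_pow_eq_one {L : Type*} [CommGroup L]
    [Finite L] (hL : IsPGroup p L) {b : ℕ} (hb : b ≠ 0) (hbL : p ^ b ≤ Monoid.exponent L) :
    p ^ b * p ^ (Group.rank L - 1) ≤ Nat.card {x : L // x ^ p ^ b = 1} := by
  classical
  have hp : p.Prime := Fact.out
  obtain ⟨κ, _, c, hc, ⟨e⟩⟩ := hL.exists_mulEquiv_pi_zmod_pow
  obtain ⟨j₀, hj₀⟩ := exists_le_of_pow_le_exponent_pi_zmod hp.one_lt hb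
    (Monoid.exponent_eq_of_mulEquiv e ▸ hbL)
  have hsum : b + (Fintype.card κ - 1) ≤ ∑ j, min b (c j) := by
    rw [← Finset.add_sum_erase _ _ (Finset.mem_univ j₀), min_eq_left hj₀]
    gcongr
    calc Fintype.card κ - 1 = ∑ j ∈ Finset.univ.erase j₀, 1 := by simp
      _ ≤ _ := Finset.sum_le_sum fun j _ => by have := hc j; omega
  have hrank := Group.rank_le_card_of_mulEquiv_pi e
  calc p ^ b * p ^ (Group.rank L - 1) ≤ p ^ (b + (Fintype.card κ - 1)) := by
        rw [pow_add]; gcongr; exact hp.one_le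
    _ ≤ p ^ ∑ j, min b (c j) := Nat.pow_le_pow_right hp.pos hsum
    _ = ∏ j, p ^ min b (c j) := (Finset.prod_pow_eq_pow_sum _ _ _).symm
    _ ≤ ∏ j, Nat.card {y : Multiplicative (ZMod (p ^ c j)) // y ^ p ^ b = 1} :=
        Finset.prod_le_prod' fun j _ => Multiplicative.pow_min_le_card_zmod_pow_pow_eq_one
    _ = Nat.card {x : L // x ^ p ^ b = 1} := by
        rw [← Nat.card_pi_pow_eq_one, e.natCard_pow_eq_one]

lemma IsPGroup.card_mul_pow_le_card_monoidHom {A L : Type*} [CommGroup A] [Finite A]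
    [CommGroup L] [Finite L] (hA : IsPGroup p A) (hL : IsPGroup p L)
    (hexp : Monoid.exponent A ≤ Monoid.exponent L) :
    Nat.card A * p ^ (Group.rank A * (Group.rank L - 1)) ≤ Nat.card (A →* L) := by
  classical
  have hp : p.Prime := Fact.out
  obtain ⟨ι, _, b, hb, ⟨e⟩⟩ := hA.exists_mulEquiv_pi_zmod_pow
  have hbA (i : ι) : p ^ b i ≤ Monoid.exponent A := by
    refine Nat.le_of_dvd (Nat.pos_of_ne_zero Monoid.exponent_ne_zero_of_finite) ?_
    rw [Monoid.exponent_eq_of_mulEquiv e, Monoid.exponent_pi]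
    simp only [Multiplicative.exponent_zmod]
    exact Finset.dvd_lcm (Finset.mem_univ i)
  have hfactor (i : ι) :
      p ^ b i * p ^ (Group.rank L - 1) ≤ Nat.card (Multiplicative (ZMod (p ^ b i)) →* L) := by
    rw [Nat.card_congr (monoidHomEquivOfForallMemZpowers Multiplicative.mem_zpowers_ofAdd_one),
      Multiplicative.orderOf_ofAdd_one]
    exact hL.pow_mul_pow_rank_sub_one_le_card_pow_eq_one (hb i) ((hbA i).trans hexp)
  have hrank := Group.rank_le_card_of_mulEquiv_pi e
  calc Nat.card A * p ^ (Group.rank A * (Group.rank L - 1))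
      ≤ (∏ i, p ^ b i) * (p ^ (Group.rank L - 1)) ^ Fintype.card ι := by
        rw [Nat.card_congr e.toEquiv, Nat.card_pi, ← pow_mul, mul_comm (Group.rank L - 1)]
        simp only [Multiplicative.natCard_zmod]
        gcongr
        exact hp.one_le
    _ = ∏ i, (p ^ b i * p ^ (Group.rank L - 1)) := by
        rw [Finset.prod_mul_distrib, Finset.prod_const, Finset.card_univ]
    _ ≤ ∏ i, Nat.card (Multiplicative (ZMod (p ^ b i)) →* L) :=
        Finset.prod_le_prod' fun i _ => hfactor i
    _ = Nat.card (A →* L) := by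
        rw [← Nat.card_pi]
        exact Nat.card_congr (e.monoidHomCongrLeft.trans (Pi.monoidHomMulEquiv _ L)).toEquiv.symm

end PGroup

section AbsCentralAut

open Subgroup

variable {G : Type*} [Group G]

lemma mk_mul_of_mem_absoluteCenter (g : G) {z : G} (hz : z ∈ absoluteCenter G) :
    ((g * z : G) : G ⧸ center G) = g := by
  rw [QuotientGroup.mk_mul, (QuotientGroup.eq_one_iff z).mpr (absoluteCenter_le_center G hz),
    mul_one]

def MonoidHom.toAbsCentralAut (f : G ⧸ center G →* absoluteCenter G) : absCentralAut G :=
  ⟨{ toFun := fun g => g * f g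
     invFun := fun g => g * (f g : G)⁻¹
     left_inv := fun g => by
       simp only [mk_mul_of_mem_absoluteCenter g (f g).2, mul_inv_cancel_right]
     right_inv := fun g => by
       simp only [mk_mul_of_mem_absoluteCenter g (inv_mem (f g).2), inv_mul_cancel_right]
     map_mul' := fun g h => by
       rw [QuotientGroup.mk_mul, map_mul, coe_mul, mul_assoc, mul_assoc,
         ← mul_assoc h, ← mul_assoc _ h,
         (mem_center_iff.mp (absoluteCenter_le_center G (f g).2) h)] },
    fun g => by simp⟩

lemma MonoidHom.toAbsCentralAut_injective :
    Function.Injective (MonoidHom.toAbsCentralAut (G := G)) := by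
  intro f f' h
  refine QuotientGroup.monoidHom_ext _ (MonoidHom.ext fun g => Subtype.ext ?_)
  exact mul_left_cancel (congrArg (fun α : absCentralAut G => α.1 g) h)

lemma card_monoidHom_le_card_absCentralAut [Finite G] :
    Nat.card (G ⧸ center G →* absoluteCenter G) ≤ Nat.card (absCentralAut G) :=
  Nat.card_le_card_of_injective _ MonoidHom.toAbsCentralAut_injective

end AbsCentralAut

lemma Subgroup.center_quotient_center_eq_top {G : Type*} [Group G]
    (h : upperCentralSeries G 2 = ⊤) : center (G ⧸ center G) = ⊤ := by
  have h' := comap_upperCentralSeries_quotient_center (G := G) 1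
  rw [h, upperCentralSeries_one] at h'
  exact comap_injective (QuotientGroup.mk'_surjective _) (h'.trans (comap_top _).symm)

/-- Let `G` be a finite `p`-group of nilpotency class `2` with
`exp(G/Z(G)) ≤ exp(L(G))`.  Then `|Aut_l(G)| ≥ |G/Z(G)| * p ^ (r * (s - 1))`,
where `r` is the rank of `G/Z(G)` and `s` is the rank of `L(G)`. -/
theorem card_absCentralAut_ge {p : ℕ} [Fact p.Prime] (G : Type*) [Group G] [Finite G]
    (hG : IsPGroup p G)
    (hclass : upperCentralSeries G 2 = ⊤ ∧ upperCentralSeries G 1 ≠ ⊤)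
    (hexp : Monoid.exponent (G ⧸ Subgroup.center G) ≤
      Monoid.exponent (absoluteCenter G)) :
    Nat.card (G ⧸ Subgroup.center G) *
        p ^ (Group.rank (G ⧸ Subgroup.center G) * (Group.rank (absoluteCenter G) - 1)) ≤
      Nat.card (absCentralAut G) := by
  let : CommGroup (G ⧸ Subgroup.center G) :=
    Group.commGroupOfCenterEqTop (Subgroup.center_quotient_center_eq_top hclass.1)
  exact ((hG.to_quotient _).card_mul_pow_le_card_monoidHom (hG.to_subgroup _) hexp).trans
    card_monoidHom_le_card_absCentralAut
end

section
/- Let G be a finite non-abelian p-group. Then Inn(G) = Aut_{Z(G)}^{L(G)}(G) if and only if the commutator subgroup G′ is contained in L(G) and L(G) is cyclic. -/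
/-!
Conjugation identifies `Inn(G)` with `G/Z(G)`, and `α ↦ (g ↦ g⁻¹ α(g))` identifies
`Aut_{Z(G)}^{L(G)}(G)` with `Hom(G/Z(G), L(G))`. The inclusion `Inn(G) ≤ Aut_{Z(G)}^{L(G)}(G)`
holds exactly when `G' ≤ L(G)`; then `A = G/Z(G)` is abelian, `A ≅ ∏ ℤ/nᵢ`, and
`|Hom(A, L)| = ∏ |L[nᵢ]|`, where `L = L(G)` and `L[n]` is its `n`-torsion.
If `L` is cyclic, `|L[n]| ≤ n`, so `|Hom(A, L)| ≤ |A|` and the inclusion is an equality.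
If `A ≅ Hom(A, L)`, every `nᵢ` divides `exp L`; were `L` not cyclic, it would have an element
of order `p` outside a cyclic subgroup of order `exp L`, giving `|L[nᵢ]| > nᵢ` for all `i`.
-/

open Subgroup Monoid
open scoped commutatorElement IsMulCommutative

section CountingHomomorphisms

variable {L : Type*} [CommGroup L]

theorem IsPGroup.mem_zpowers_of_forall_pow_prime_eq_one {p : ℕ} [hp : Fact p.Prime]
    (hL : IsPGroup p L) {g : L} (hg : ∀ x : L, x ^ orderOf g = 1)
    (hpg : ∀ x : L, x ^ p = 1 → x ∈ zpowers g) (x : L) : x ∈ zpowers g := by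
  rcases eq_or_ne g 1 with rfl | hg1
  · simpa using hg x
  obtain ⟨M, hM⟩ := hL.dvd_orderOf hg1
  have hM0 : (M : ℤ) ≠ 0 := by
    rintro h
    exact (hL.isOfFinOrder hp.out.ne_zero g).orderOf_pos.ne' (by simp_all)
  obtain ⟨k, hk⟩ := hL x
  induction k generalizing x with
  | zero => simp_all
  | succ k ih =>
    obtain ⟨m, hm⟩ := mem_zpowers_iff.mp (ih (x ^ p) (by rw [← pow_mul, ← pow_succ', hk]))
    -- `x ^ p = g ^ m` has order dividing `orderOf g / p`, which forces `p ∣ m`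
    obtain ⟨q, rfl⟩ : (p : ℤ) ∣ m := by
      have h1 : g ^ (m * M) = 1 := by
        rw [zpow_mul, hm, zpow_natCast, ← pow_mul, ← hM, hg]
      have h2 := orderOf_dvd_iff_zpow_eq_one.mpr h1
      rw [hM, Nat.cast_mul] at h2
      exact Int.dvd_of_mul_dvd_mul_right hM0 h2
    have hy : (x * g ^ (-q)) ^ p = 1 := by
      rw [mul_pow, ← hm, ← zpow_natCast (g ^ (-q)), ← zpow_mul, ← zpow_add]
      simp [mul_comm]
    simpa using mul_mem (hpg _ hy) (zpow_mem (mem_zpowers g) q)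

theorem card_monoidHom_zmod_eq_card_ker (n : ℕ) [NeZero n] :
    Nat.card (Multiplicative (ZMod n) →* L) = Nat.card (powMonoidHom n : L →* L).ker := by
  obtain ⟨e⟩ := IsCyclic.monoidHom_mulEquiv_rootsOfUnity (Multiplicative (ZMod n)) L
  rw [Nat.card_congr e.toEquiv, Nat.card_congr Multiplicative.toAdd, Nat.card_zmod]
  exact Nat.card_congr <| toUnits.symm.toEquiv.subtypeEquiv fun u => by
    simp [← Units.val_pow_eq_pow_val, Units.val_eq_one]

theorem card_monoidHom_eq_prod_card_ker {A ι : Type*} [CommGroup A] [Fintype ι] {n : ι → ℕ}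
    [∀ i, NeZero (n i)] (e : A ≃* ∀ i, Multiplicative (ZMod (n i))) :
    Nat.card (A →* L) = ∏ i, Nat.card (powMonoidHom (n i) : L →* L).ker := by
  classical
  rw [Nat.card_congr ((MulEquiv.monoidHomCongrLeft e).trans
    (Pi.monoidHomMulEquiv _ L)).toEquiv, Nat.card_pi]
  simp only [card_monoidHom_zmod_eq_card_ker]

theorem IsPGroup.lt_card_powMonoidHom_ker {p : ℕ} [Fact p.Prime] [Finite L] (hL : IsPGroup p L)
    (hcyc : ¬IsCyclic L) {n : ℕ} (hn : n ∣ exponent L) (hn1 : 1 < n) :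
    n < Nat.card (powMonoidHom n : L →* L).ker := by
  obtain ⟨g, hg⟩ := exists_orderOf_eq_exponent (ExponentExists.of_finite (G := L))
  set h := g ^ (orderOf g / n)
  have hh : orderOf h = n :=
    orderOf_pow_orderOf_div (hg ▸ exponent_ne_zero_of_finite) (hg ▸ hn)
  have hle : zpowers h ≤ (powMonoidHom n : L →* L).ker := zpowers_le.mpr <| by
    simpa [hh] using pow_orderOf_eq_one h
  obtain ⟨x, hxp, hxg⟩ : ∃ x : L, x ^ p = 1 ∧ x ∉ zpowers g := by
    by_contra! H
    exact hcyc ⟨g, fun x => mem_zpowers_iff.mp <| hL.mem_zpowers_of_forall_pow_prime_eq_one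
      (fun y => hg ▸ pow_exponent_eq_one y) H x⟩
  have hx : x ∈ (powMonoidHom n : L →* L).ker := by
    have hh1 : h ≠ 1 := fun h1 => by simp [h1] at hh; omega
    obtain ⟨m, hm⟩ := hL.dvd_orderOf hh1
    rw [MonoidHom.mem_ker, powMonoidHom_apply, ← hh, hm, pow_mul, hxp, one_pow]
  refine lt_of_not_ge fun hcard => hxg ?_
  have heq := eq_of_le_of_card_ge hle (by rwa [Nat.card_zpowers, hh])
  exact zpowers_le.mpr (pow_mem (mem_zpowers g) _) (heq ▸ hx)

theorem CommGroup.exists_card_monoidHom_eq_prod (A : Type*) [CommGroup A] [Finite A] (L : Type*)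
    [CommGroup L] : ∃ (ι : Type) (_ : Fintype ι) (n : ι → ℕ), (∀ i, 1 < n i) ∧
      (∀ i, n i ∣ exponent A) ∧ Nat.card A = ∏ i, n i ∧
      Nat.card (A →* L) = ∏ i, Nat.card (powMonoidHom (n i) : L →* L).ker := by
  classical
  obtain ⟨ι, _, n, hn, ⟨e⟩⟩ := CommGroup.equiv_prod_multiplicative_zmod_of_finite A
  have : ∀ i, NeZero (n i) := fun i => ⟨by have := hn i; omega⟩
  refine ⟨ι, inferInstance, n, hn, fun i => ?_, ?_, ?_⟩
  · have := MonoidHom.exponent_dvd (f := (Pi.evalMonoidHom _ i).comp e.toMonoidHom)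
      ((Function.surjective_eval i).comp e.surjective)
    rwa [exponent_multiplicative, ZMod.exponent] at this
  · simp [Nat.card_congr e.toEquiv]
  · exact card_monoidHom_eq_prod_card_ker e

theorem card_monoidHom_le_card_of_isCyclic (A : Type*) [CommGroup A] [Finite A] [Finite L]
    [IsCyclic L] : Nat.card (A →* L) ≤ Nat.card A := by
  obtain ⟨ι, _, n, hn, -, hA, hAL⟩ := CommGroup.exists_card_monoidHom_eq_prod A L
  rw [hA, hAL]
  exact Finset.prod_le_prod' fun i _ => (IsCyclic.card_powMonoidHom_ker L (n i)).trans_le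
    (Nat.gcd_le_right _ (Nat.zero_lt_of_lt (hn i)))

theorem IsPGroup.isCyclic_of_mulEquiv_monoidHom {p : ℕ} [Fact p.Prime] {A : Type*} [CommGroup A]
    [Finite A] [Nontrivial A] [Finite L] (hL : IsPGroup p L) (e : A ≃* (A →* L)) :
    IsCyclic L := by
  by_contra hcyc
  obtain ⟨ι, _, n, hn, hnA, hA, hAL⟩ := CommGroup.exists_card_monoidHom_eq_prod A L
  have hexp : exponent A ∣ exponent L := by
    rw [exponent_eq_of_mulEquiv e]
    exact exponent_dvd_of_forall_pow_eq_one fun f => by ext; simp [Monoid.pow_exponent_eq_one]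
  have : Nonempty ι := by
    by_contra! hι
    rw [Finset.univ_eq_empty, Finset.prod_empty] at hA
    exact (Finite.one_lt_card (α := A)).ne' hA
  have hlt : ∏ i, n i < ∏ i, Nat.card (powMonoidHom (n i) : L →* L).ker :=
    Finset.prod_lt_prod_of_nonempty (fun i _ => Nat.zero_lt_of_lt (hn i))
      (fun i _ => hL.lt_card_powMonoidHom_ker hcyc ((hnA i).trans hexp) (hn i))
      Finset.univ_nonempty
  rw [← hA, ← hAL, ← Nat.card_congr e.toEquiv] at hlt
  exact lt_irrefl _ hlt

end CountingHomomorphisms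

section AbsoluteCentralAutomorphisms

variable {G : Type*} [Group G]

theorem MulAut.ker_conj : (MulAut.conj : G →* MulAut G).ker = center G := by
  ext h
  simp only [MonoidHom.mem_ker, MulEquiv.ext_iff, MulAut.conj_apply, MulAut.one_apply,
    mem_center_iff]
  exact forall_congr' fun g => mul_inv_eq_iff_eq_mul.trans eq_comm

theorem range_conj_le_autZL_iff :
    (MulAut.conj : G →* MulAut G).range ≤ autZL G ↔ commutator G ≤ absoluteCenter G := by
  constructor
  · intro h
    rw [commutator_def, commutator_le]
    rintro g₁ - g₂ -
    have := (h ⟨g₂, rfl⟩).1 g₁⁻¹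
    rwa [MulAut.conj_apply, inv_inv, ← mul_assoc, ← mul_assoc,
      ← commutatorElement_def] at this
  · rintro h _ ⟨k, rfl⟩
    refine ⟨fun g => ?_, fun z hz => ?_⟩
    · have : g⁻¹ * MulAut.conj k g = ⁅g⁻¹, k⁆ := by
        rw [MulAut.conj_apply, commutatorElement_def]; group
      exact this ▸ h (commutator_mem_commutator (mem_top _) (mem_top _))
    · rw [MulAut.conj_apply, mem_center_iff.mp hz k, mul_inv_cancel_right]

def autZLToMonoidHom (α : autZL G) : G →* absoluteCenter G where
  toFun g := ⟨g⁻¹ * α.1 g, α.2.1 g⟩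
  map_one' := by ext; simp
  map_mul' g h := by
    ext
    have hc := mem_center_iff.mp (absoluteCenter_le_center G (α.2.1 g)) h⁻¹
    calc (g * h)⁻¹ * α.1 (g * h) = h⁻¹ * (g⁻¹ * α.1 g) * α.1 h := by rw [map_mul]; group
      _ = g⁻¹ * α.1 g * (h⁻¹ * α.1 h) := by rw [hc]; group

theorem center_le_ker_autZLToMonoidHom (α : autZL G) :
    center G ≤ (autZLToMonoidHom α).ker := fun z hz => by
  ext
  exact (congrArg _ (α.2.2 z hz)).trans (inv_mul_cancel z)

theorem apply_mk_eq_one_of_mem_absoluteCenter (F : G ⧸ center G →* absoluteCenter G) {z : G}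
    (hz : z ∈ absoluteCenter G) : F z = 1 := by
  rw [(QuotientGroup.eq_one_iff z).mpr (absoluteCenter_le_center G hz), map_one]

def autZLOfMonoidHom (F : G ⧸ center G →* absoluteCenter G) : MulAut G where
  toFun g := g * F g
  invFun g := g * (F g)⁻¹
  left_inv g := by
    simp [apply_mk_eq_one_of_mem_absoluteCenter F (F g).2]
  right_inv g := by
    simp [apply_mk_eq_one_of_mem_absoluteCenter F (F g).2]
  map_mul' g h := by
    have hc := mem_center_iff.mp (absoluteCenter_le_center G (F g).2) h
    simp only [QuotientGroup.mk_mul, map_mul, coe_mul]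
    rw [mul_assoc g, ← mul_assoc h, hc]
    simp only [mul_assoc]

theorem autZLOfMonoidHom_mem (F : G ⧸ center G →* absoluteCenter G) :
    autZLOfMonoidHom F ∈ autZL G :=
  ⟨fun g => by simp [autZLOfMonoidHom], fun z hz => by
    simp [autZLOfMonoidHom, (QuotientGroup.eq_one_iff z).mpr hz]⟩

def autZLEquivMonoidHom : autZL G ≃* (G ⧸ center G →* absoluteCenter G) where
  toFun α := QuotientGroup.lift _ (autZLToMonoidHom α) (center_le_ker_autZLToMonoidHom α)
  invFun F := ⟨autZLOfMonoidHom F, autZLOfMonoidHom_mem F⟩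
  left_inv α := Subtype.ext <| MulEquiv.ext fun g => mul_inv_cancel_left g (α.1 g)
  right_inv F := by
    ext g
    exact inv_mul_cancel_left g (F g : G)
  map_mul' α β := by
    ext g
    have hfix : α.1 (g⁻¹ * β.1 g) = g⁻¹ * β.1 g := β.2.1 g α.1
    show g⁻¹ * α.1 (β.1 g) = g⁻¹ * α.1 g * (g⁻¹ * β.1 g)
    rw [← mul_inv_cancel_left g (β.1 g), map_mul, hfix, inv_mul_cancel_left, mul_assoc]

end AbsoluteCentralAutomorphisms

/-- Let `G` be a finite non-abelian `p`-group.  Then `Inn(G) = Aut_{Z(G)}^{L(G)}(G)` if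
and only if `G' ≤ L(G)` and `L(G)` is cyclic. -/
theorem inn_eq_autZL_iff {p : ℕ} [Fact p.Prime] (G : Type*) [Group G] [Finite G]
    (hG : IsPGroup p G) (hna : ∃ a b : G, a * b ≠ b * a) :
    (MulAut.conj : G →* MulAut G).range = autZL G ↔
      commutator G ≤ absoluteCenter G ∧ IsCyclic (absoluteCenter G) := by
  have innEquiv : G ⧸ center G ≃* (MulAut.conj : G →* MulAut G).range :=
    (QuotientGroup.quotientMulEquivOfEq MulAut.ker_conj.symm).trans
      (QuotientGroup.quotientKerEquivRange _)
  have commutative_of_le (hcomm : commutator G ≤ absoluteCenter G) :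
      IsMulCommutative (G ⧸ center G) :=
    Normal.quotient_commutative_iff_commutator_le.mpr (hcomm.trans (absoluteCenter_le_center G))
  constructor
  · intro h
    have hcomm := range_conj_le_autZL_iff.mp h.le
    have := commutative_of_le hcomm
    have : Nontrivial (G ⧸ center G) := QuotientGroup.nontrivial_iff.mpr fun htop => by
      obtain ⟨a, b, hab⟩ := hna
      exact hab (mem_center_iff.mp (htop ▸ mem_top b) a)
    exact ⟨hcomm, (hG.to_subgroup _).isCyclic_of_mulEquiv_monoidHom
      (innEquiv.trans ((MulEquiv.subgroupCongr h).trans autZLEquivMonoidHom))⟩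
  · rintro ⟨hcomm, hcyc⟩
    have := commutative_of_le hcomm
    refine eq_of_le_of_card_ge (range_conj_le_autZL_iff.mpr hcomm) ?_
    calc Nat.card (autZL G) = Nat.card (G ⧸ center G →* absoluteCenter G) :=
          Nat.card_congr autZLEquivMonoidHom.toEquiv
      _ ≤ Nat.card (G ⧸ center G) := card_monoidHom_le_card_of_isCyclic _
      _ = _ := Nat.card_congr innEquiv.toEquiv
end

section
/- Let G be a finite non-abelian p-group with G′ ≤ L(G), L(G) cyclic, and Z(G) = L(G)·G^{p^n} where p^n = exp(L(G)). Then every absolute central automorphism of G fixes Z(G) elementwise, i.e., Aut_l(G) ≤ Aut_{Z(G)}^{L(G)}(G). -/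
/-- The subgroup `G^m` generated by all `m`-th powers of elements of `G`. -/
def powSubgroup (G : Type*) [Group G] (m : ℕ) : Subgroup G :=
  Subgroup.closure {x : G | ∃ g : G, g ^ m = x}

/-- Let `G` be a finite non-abelian `p`-group with `G' ≤ L(G)`, `L(G)` cyclic, and
`Z(G) = L(G) * G ^ (p ^ n)` where `p ^ n = exp(L(G))`.  Then every absolute central
automorphism of `G` fixes `Z(G)` elementwise, i.e. `Aut_l(G) ≤ Aut_{Z(G)}^{L(G)}(G)`. -/
theorem absCentralAut_le_autZL {p : ℕ} [Fact p.Prime] (G : Type*) [Group G] [Finite G]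
    (hG : IsPGroup p G) (hna : ∃ a b : G, a * b ≠ b * a)
    (hcomm : commutator G ≤ absoluteCenter G)
    (hcyc : IsCyclic (absoluteCenter G))
    (n : ℕ) (hn : Monoid.exponent (absoluteCenter G) = p ^ n)
    (hZ : Subgroup.center G = absoluteCenter G ⊔ powSubgroup G (p ^ n)) :
    absCentralAut G ≤ autZL G := by
  intro α hα
  refine ⟨hα, fun z hz => ?_⟩
  rw [hZ] at hz
  have key : absoluteCenter G ⊔ powSubgroup G (p ^ n) ≤
      α.toMonoidHom.eqLocus (MonoidHom.id G) := by
    refine sup_le (fun l hl => hl α) ?_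
    refine Subgroup.closure_le _ |>.mpr ?_
    rintro x ⟨g, rfl⟩
    have hl : g⁻¹ * α g ∈ absoluteCenter G := hα g
    have hc : g * (g⁻¹ * α g) = (g⁻¹ * α g) * g :=
      Subgroup.mem_center_iff.mp (absoluteCenter_le_center G hl) g
    have hpow : (g⁻¹ * α g) ^ (p ^ n) = 1 := by
      have := Monoid.pow_exponent_eq_one (⟨g⁻¹ * α g, hl⟩ : absoluteCenter G)
      rw [hn] at this
      exact congrArg Subtype.val this
    have hαg : α g = g * (g⁻¹ * α g) := by group
    show α (g ^ p ^ n) = g ^ p ^ n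
    rw [map_pow, hαg, (Commute.mul_pow hc), hpow, mul_one]
  exact key hz
end
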